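/- For every digraph D there exists a constant C_D > 0 such that for every nonzero restriction vector r, writing M = max_{v ∈ V(D)} r_v, we have max_{v ∈ V(D)} ( Σ_{u ∈ N^+(v)} r_u − Σ_{u ∈ N^-(v)} r_u ) ≤ S_D(r) ≤ max_{v ∈ V(D)} ( Σ_{u ∈ N^+(v)} r_u − Σ_{u ∈ N^-(v)} r_u ) + C_D · M^{2/3}. -/

import Mathlib

open Finset

/-- A digraph: finite vertex set, no loops, at most one arc per pair. -/
structure Digraph' (V : Type) where
  Adj : V → V → Bool
  irrefl : ∀ v, Adj v v = false
  asymm : ∀ u v, Adj u v = true → Adj v u = false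

namespace Digraph'

variable {V : Type} [Fintype V] [DecidableEq V] (D : Digraph' V)

/-- Out-neighborhood N⁺(v). -/
def outN (v : V) : Finset V := univ.filter fun u => D.Adj v u
/-- In-neighborhood N⁻(v). -/
def inN (v : V) : Finset V := univ.filter fun u => D.Adj u v

/-- max over vertices v of Σ_{u∈N⁺(v)} p u − Σ_{u∈N⁻(v)} p u. -/
noncomputable def payoff (p : V → ℝ) : ℝ :=
  sSup (Set.range fun v => (∑ u ∈ D.outN v, p u) - ∑ u ∈ D.inN v, p u)

/-- Auxiliary (fuel-indexed) definition of the value of the semi-restricted D-game. -/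
noncomputable def valueAux : ℕ → (V → ℕ) → ℝ
  | 0, _ => 0
  | (n+1), r =>
    if ∀ u, r u = 0 then 0
    else sInf { x : ℝ | ∃ p : V → ℝ, (∀ u, 0 ≤ p u) ∧ (∑ u, p u = 1) ∧
      (∀ u, p u ≠ 0 → r u ≠ 0) ∧
      x = D.payoff p + ∑ u, p u * valueAux n (fun w => r w - if w = u then 1 else 0) }

/-- The value S_D(r) of the semi-restricted D-game with restriction vector r. -/
noncomputable def value (r : V → ℕ) : ℝ := D.valueAux (∑ u, r u) r

end Digraph'

/-- A strategy for Rei in the semi-restricted D-game. -/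
structure ReiStrategy {V : Type} [Fintype V] [DecidableEq V] (D : Digraph' V) where
  play : (V → ℕ) → V → ℝ
  nonneg : ∀ r : V → ℕ, (¬ ∀ u, r u = 0) → ∀ u, 0 ≤ play r u
  sum_one : ∀ r : V → ℕ, (¬ ∀ u, r u = 0) → ∑ u, play r u = 1
  supp : ∀ r : V → ℕ, (¬ ∀ u, r u = 0) → ∀ u, play r u ≠ 0 → r u ≠ 0

namespace Digraph'

variable {V : Type} [Fintype V] [DecidableEq V] (D : Digraph' V)

/-- Auxiliary (fuel-indexed) value of Rei's strategy R. -/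
noncomputable def stratValueAux (R : ReiStrategy D) : ℕ → (V → ℕ) → ℝ
  | 0, _ => 0
  | (n+1), r =>
    if ∀ u, r u = 0 then 0
    else D.payoff (R.play r) +
      ∑ u, R.play r u * stratValueAux R n (fun w => r w - if w = u then 1 else 0)

/-- The value S_D(r; R) of Rei's strategy R at restriction vector r. -/
noncomputable def stratValue (R : ReiStrategy D) (r : V → ℕ) : ℝ :=
  D.stratValueAux R (∑ u, r u) r

/-- A strategy for Rei is optimal if its value equals the game value at every restriction vector. -/
def IsOptimal (R : ReiStrategy D) : Prop := ∀ r : V → ℕ, D.stratValue R r = D.value r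

/-- A strategy is oblivious if it only depends on the support of the restriction vector. -/
def IsOblivious (R : ReiStrategy D) : Prop :=
  ∀ r r' : V → ℕ, (∀ u, r u ≠ 0 ↔ r' u ≠ 0) → R.play r = R.play r'

/-- A digraph is oblivious if Rei has an oblivious optimal strategy. -/
def Oblivious : Prop := ∃ R : ReiStrategy D, D.IsOptimal R ∧ D.IsOblivious R

/-- A tournament: exactly one arc between any two distinct vertices. -/
def IsTournament : Prop := ∀ u v : V, u ≠ v → (D.Adj u v = true ∨ D.Adj v u = true)

/-- Eulerian: every vertex has equal in- and out-degree. -/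
def IsEulerian : Prop := ∀ v : V, (D.outN v).card = (D.inN v).card

/-- The skew adjacency matrix of a digraph. -/
def skewAdj : Matrix V V ℝ := fun u v =>
  if D.Adj u v then 1 else if D.Adj v u then -1 else 0

end Digraph'

/-
Write `A` for the skew adjacency matrix, so that the bracket in the theorem is
`payoff r = max_v (A r) v`.

Lower bound: removing `u` lowers the score `(A r) v` of a fixed vertex by `A v u`, so a move
`p` lowers it by `(A p) v ≤ payoff p` on average; by induction the game costs at least the
initial score of every vertex.

Upper bound: Rei plays proportionally, `p = r / |r|`, and we track the log-sum-exp potential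
`Ψ_t r = log ∑_v exp (t (A r) v)` (`softPayoff t r`), which lies between `t payoff r` and
`t payoff r + log N`. Expanding `exp` to second order, applying Jensen to `log`, and using that
the exponential weights concentrate within `1/t` of the maximum, a proportional move raises `Ψ_t`
in expectation by at most `t² + N / |r| - t payoff p`. Hence
`S_D(r) ≤ Ψ_t r / t + t |r| + (N / t) H_{|r|}`, and `t = M^(-1/3)` together with `|r| ≤ N M`
leaves an error of order `M^(2/3)`.
-/

open Matrix

-- `r - δ_u` exactly as it is written in `valueAux` (truncated subtraction).
local notation:65 r:65 " -δ " u:66 => fun w => r w - ite (w = u) 1 0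

theorem Matrix.dotProduct_mulVec_self_eq_zero {n R : Type*} [Fintype n] [CommRing R]
    [IsAddTorsionFree R] {A : Matrix n n R} (hA : Aᵀ = -A) (x : n → R) :
    x ⬝ᵥ A *ᵥ x = 0 := by
  refine self_eq_neg.mp ?_
  calc x ⬝ᵥ A *ᵥ x = Aᵀ *ᵥ x ⬝ᵥ x := by rw [dotProduct_mulVec, mulVec_transpose]
    _ = -(x ⬝ᵥ A *ᵥ x) := by rw [hA, neg_mulVec, neg_dotProduct, dotProduct_comm]

lemma exp_le_one_add_add_sq {x : ℝ} (hx : |x| ≤ 1) : Real.exp x ≤ 1 + x + x ^ 2 := by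
  linarith [(abs_le.mp (Real.abs_exp_sub_one_sub_id_le hx)).2]

lemma mul_exp_neg_mul_le_inv {t : ℝ} (ht : 0 < t) (s : ℝ) : s * Real.exp (-(t * s)) ≤ t⁻¹ := by
  have h := Real.mul_exp_neg_le_exp_neg_one (t * s)
  have h1 : Real.exp (-1) ≤ 1 := Real.exp_le_one_iff.mpr (by norm_num)
  calc s * Real.exp (-(t * s)) = t⁻¹ * (t * s * Real.exp (-(t * s))) := by field_simp
    _ ≤ t⁻¹ * 1 := by gcongr; linarith
    _ = t⁻¹ := mul_one _

namespace Digraph'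

section Payoff

variable {V : Type} (D : Digraph' V)

lemma skewAdj_transpose : D.skewAdjᵀ = -D.skewAdj := by
  ext u v
  have := D.asymm u v
  have := D.asymm v u
  cases h : D.Adj u v <;> cases h' : D.Adj v u <;> simp_all [skewAdj]

lemma abs_skewAdj_le (u v : V) : |D.skewAdj u v| ≤ 1 := by
  unfold skewAdj
  split_ifs <;> simp

variable [Fintype V]

lemma sum_outN_sub_sum_inN [DecidableEq V] (x : V → ℝ) (v : V) :
    ∑ u ∈ D.outN v, x u - ∑ u ∈ D.inN v, x u = (D.skewAdj *ᵥ x) v := by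
  simp only [outN, inN, Finset.sum_filter, ← Finset.sum_sub_distrib, mulVec, dotProduct]
  refine Finset.sum_congr rfl fun u _ => ?_
  have := D.asymm v u
  cases h : D.Adj v u <;> cases h' : D.Adj u v <;> simp_all [skewAdj]

variable [DecidableEq V]

lemma payoff_eq_sSup_range (x : V → ℝ) : D.payoff x = sSup (Set.range (D.skewAdj *ᵥ x)) := by
  simp only [payoff, sum_outN_sub_sum_inN]

lemma le_payoff (x : V → ℝ) (v : V) : (D.skewAdj *ᵥ x) v ≤ D.payoff x := by
  rw [payoff_eq_sSup_range]
  exact le_csSup (Set.finite_range _).bddAbove ⟨v, rfl⟩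

/-- The `p`-average of the scores is `p ⬝ᵥ A p = 0`. -/
lemma payoff_nonneg {p : V → ℝ} (hp0 : ∀ u, 0 ≤ p u) (hp1 : ∑ u, p u = 1) : 0 ≤ D.payoff p := by
  calc (0 : ℝ) = ∑ v, p v * (D.skewAdj *ᵥ p) v :=
        (dotProduct_mulVec_self_eq_zero D.skewAdj_transpose p).symm
    _ ≤ ∑ v, p v * D.payoff p :=
        Finset.sum_le_sum fun v _ => mul_le_mul_of_nonneg_left (D.le_payoff p v) (hp0 v)
    _ = D.payoff p := by rw [← Finset.sum_mul, hp1, one_mul]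

variable [Nonempty V]

lemma payoff_le {x : V → ℝ} {B : ℝ} (h : ∀ v, (D.skewAdj *ᵥ x) v ≤ B) : D.payoff x ≤ B := by
  rw [payoff_eq_sSup_range]
  exact csSup_le (Set.range_nonempty _) (Set.forall_mem_range.mpr h)

lemma exists_mulVec_eq_payoff (x : V → ℝ) : ∃ v, (D.skewAdj *ᵥ x) v = D.payoff x := by
  obtain ⟨v, -, hv⟩ := Finset.exists_max_image univ (D.skewAdj *ᵥ x) univ_nonempty
  exact ⟨v, le_antisymm (D.le_payoff x v) (D.payoff_le fun u => hv u (mem_univ u))⟩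

lemma payoff_smul {c : ℝ} (hc : 0 < c) (x : V → ℝ) : D.payoff (c • x) = c * D.payoff x := by
  refine le_antisymm (D.payoff_le fun v => ?_) ?_
  · rw [mulVec_smul, Pi.smul_apply, smul_eq_mul]
    exact mul_le_mul_of_nonneg_left (D.le_payoff x v) hc.le
  · rw [← le_div_iff₀' hc]
    refine D.payoff_le fun v => ?_
    rw [le_div_iff₀' hc, ← smul_eq_mul, ← Pi.smul_apply c, ← mulVec_smul]
    exact D.le_payoff _ v

end Payoff

section Game

variable {V : Type} [DecidableEq V]

lemma cast_sub_single {r : V → ℕ} {u : V} (hu : r u ≠ 0) :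
    (fun w => ((r -δ u) w : ℝ)) = (fun w => (r w : ℝ)) - Pi.single u 1 := by
  funext w
  by_cases h : w = u
  · subst h
    simp [Nat.cast_sub (Nat.one_le_iff_ne_zero.mpr hu)]
  · simp [h]

variable [Fintype V]

lemma sum_sub_single {r : V → ℕ} {u : V} (hu : r u ≠ 0) : ∑ w, (r -δ u) w = ∑ w, r w - 1 := by
  rw [Finset.sum_tsub_distrib _ fun w _ => ?_, Finset.sum_ite_eq' univ u, if_pos (mem_univ u)]
  split_ifs with h
  · subst h; exact Nat.one_le_iff_ne_zero.mpr hu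
  · exact Nat.zero_le _

variable (D : Digraph' V)

lemma mulVec_cast_sub_single {r : V → ℕ} {u : V} (hu : r u ≠ 0) (v : V) :
    (D.skewAdj *ᵥ fun w => ((r -δ u) w : ℝ)) v =
      (D.skewAdj *ᵥ fun w => (r w : ℝ)) v - D.skewAdj v u := by
  rw [cast_sub_single hu, mulVec_sub, mulVec_single_one, Pi.sub_apply, col_apply]

lemma le_valueAux_succ {n : ℕ} {r : V → ℕ} (hr : ¬ ∀ u, r u = 0) {B : ℝ}
    (h : ∀ p : V → ℝ, (∀ u, 0 ≤ p u) → ∑ u, p u = 1 → (∀ u, p u ≠ 0 → r u ≠ 0) →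
      B ≤ D.payoff p + ∑ u, p u * D.valueAux n (r -δ u)) :
    B ≤ D.valueAux (n + 1) r := by
  rw [valueAux, if_neg hr]
  obtain ⟨u₀, hu₀⟩ := not_forall.mp hr
  refine le_csInf ⟨_, Pi.single u₀ 1, fun u => ?_, by simp, fun u hu => ?_, rfl⟩ ?_
  · by_cases h : u = u₀ <;> simp [h]
  · by_cases h : u = u₀
    · exact h ▸ hu₀
    · simp [h] at hu
  · rintro x ⟨p, hp0, hp1, hps, rfl⟩
    exact h p hp0 hp1 hps

lemma valueAux_nonneg (n : ℕ) (r : V → ℕ) : 0 ≤ D.valueAux n r := by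
  induction n generalizing r with
  | zero => rw [valueAux]
  | succ n ih =>
    by_cases hr : ∀ u, r u = 0
    · rw [valueAux, if_pos hr]
    refine D.le_valueAux_succ hr fun p hp0 hp1 _ => ?_
    have := D.payoff_nonneg hp0 hp1
    have := Finset.sum_nonneg fun u (_ : u ∈ univ) => mul_nonneg (hp0 u) (ih (r -δ u))
    linarith

lemma valueAux_succ_le {n : ℕ} {r : V → ℕ} (hr : ¬ ∀ u, r u = 0) {p : V → ℝ}
    (hp0 : ∀ u, 0 ≤ p u) (hp1 : ∑ u, p u = 1) (hps : ∀ u, p u ≠ 0 → r u ≠ 0) :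
    D.valueAux (n + 1) r ≤ D.payoff p + ∑ u, p u * D.valueAux n (r -δ u) := by
  rw [valueAux, if_neg hr]
  refine csInf_le ⟨0, ?_⟩ ⟨p, hp0, hp1, hps, rfl⟩
  rintro x ⟨q, hq0, hq1, -, rfl⟩
  have := D.payoff_nonneg hq0 hq1
  have := Finset.sum_nonneg fun u (_ : u ∈ univ) =>
    mul_nonneg (hq0 u) (D.valueAux_nonneg n (r -δ u))
  linarith

variable [Nonempty V]

lemma payoff_le_valueAux (n : ℕ) (r : V → ℕ) (hn : ∑ u, r u = n) :
    D.payoff (fun u => (r u : ℝ)) ≤ D.valueAux n r := by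
  induction n generalizing r with
  | zero =>
    have hr : ∀ u, r u = 0 := fun u => Finset.sum_eq_zero_iff.mp hn u (mem_univ u)
    rw [valueAux]
    exact D.payoff_le fun v => by simp [hr, mulVec, dotProduct]
  | succ n ih =>
    have hr : ¬ ∀ u, r u = 0 := fun hr => by simp [hr] at hn
    refine D.le_valueAux_succ hr fun p hp0 hp1 hps => D.payoff_le fun v => ?_
    have hstep : ∀ u, p u * ((D.skewAdj *ᵥ fun w => (r w : ℝ)) v - D.skewAdj v u) ≤
        p u * D.valueAux n (r -δ u) := fun u => by
      by_cases hpu : p u = 0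
      · simp [hpu]
      refine mul_le_mul_of_nonneg_left ?_ (hp0 u)
      rw [← D.mulVec_cast_sub_single (hps u hpu)]
      exact (D.le_payoff _ v).trans (ih _ (by rw [sum_sub_single (hps u hpu), hn]; rfl))
    have havg : ∑ u, p u * ((D.skewAdj *ᵥ fun w => (r w : ℝ)) v - D.skewAdj v u) =
        (D.skewAdj *ᵥ fun w => (r w : ℝ)) v - (D.skewAdj *ᵥ p) v := by
      simp only [mul_sub, Finset.sum_sub_distrib, ← Finset.sum_mul, hp1, one_mul]
      simp only [mulVec, dotProduct, mul_comm]
    have := Finset.sum_le_sum fun u (_ : u ∈ univ) => hstep u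
    linarith [D.le_payoff p v]

lemma payoff_le_value (r : V → ℕ) : D.payoff (fun u => (r u : ℝ)) ≤ D.value r :=
  D.payoff_le_valueAux _ r rfl

end Game

section Smoothing

variable {V : Type} [Fintype V] (D : Digraph' V)

noncomputable def softPayoff (t : ℝ) (x : V → ℝ) : ℝ :=
  Real.log (∑ v, Real.exp (t * (D.skewAdj *ᵥ x) v))

lemma sum_exp_pos [Nonempty V] (t : ℝ) (x : V → ℝ) : 0 < ∑ v, Real.exp (t * (D.skewAdj *ᵥ x) v) :=
  Finset.sum_pos (fun _ _ => Real.exp_pos _) univ_nonempty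

lemma softPayoff_zero (t : ℝ) : D.softPayoff t 0 = Real.log (Fintype.card V) := by
  simp [softPayoff]

lemma sum_exp_mulVec_sub_single_le [DecidableEq V] {t : ℝ} (ht0 : 0 ≤ t) (ht1 : t ≤ 1)
    (x : V → ℝ) (u : V) :
    ∑ v, Real.exp (t * (D.skewAdj *ᵥ (x - Pi.single u 1)) v) ≤
      ∑ v, Real.exp (t * (D.skewAdj *ᵥ x) v) * (1 - t * D.skewAdj v u + t ^ 2) := by
  refine Finset.sum_le_sum fun v _ => ?_
  have hA := D.abs_skewAdj_le v u
  have htA : |-(t * D.skewAdj v u)| ≤ 1 := by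
    rw [abs_neg, abs_mul, abs_of_nonneg ht0]
    exact mul_le_one₀ ht1 (abs_nonneg _) hA
  have hA2 : (t * D.skewAdj v u) ^ 2 ≤ t ^ 2 := by
    rw [mul_pow]
    exact mul_le_of_le_one_right (sq_nonneg t) ((sq_le_one_iff_abs_le_one _).mpr hA)
  rw [mulVec_sub, mulVec_single_one, Pi.sub_apply, col_apply, mul_sub, sub_eq_add_neg,
    Real.exp_add]
  gcongr
  linarith [exp_le_one_add_add_sq htA, neg_sq (t * D.skewAdj v u)]

lemma sum_mul_sum_exp_mulVec_sub_single_le [DecidableEq V] {t : ℝ} (ht0 : 0 ≤ t) (ht1 : t ≤ 1)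
    (x : V → ℝ) {q : V → ℝ} (hq0 : ∀ u, 0 ≤ q u) (hq1 : ∑ u, q u = 1) :
    ∑ u, q u * ∑ v, Real.exp (t * (D.skewAdj *ᵥ (x - Pi.single u 1)) v) ≤
      (1 + t ^ 2) * ∑ v, Real.exp (t * (D.skewAdj *ᵥ x) v) -
        t * ∑ v, Real.exp (t * (D.skewAdj *ᵥ x) v) * (D.skewAdj *ᵥ q) v := by
  calc ∑ u, q u * ∑ v, Real.exp (t * (D.skewAdj *ᵥ (x - Pi.single u 1)) v)
      ≤ ∑ u, q u * ∑ v, Real.exp (t * (D.skewAdj *ᵥ x) v) * (1 - t * D.skewAdj v u + t ^ 2) :=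
        Finset.sum_le_sum fun u _ =>
          mul_le_mul_of_nonneg_left (D.sum_exp_mulVec_sub_single_le ht0 ht1 x u) (hq0 u)
    _ = ∑ v, ∑ u, q u * (Real.exp (t * (D.skewAdj *ᵥ x) v) * (1 - t * D.skewAdj v u + t ^ 2)) := by
        simp only [Finset.mul_sum]
        exact Finset.sum_comm
    _ = ∑ v, Real.exp (t * (D.skewAdj *ᵥ x) v) * ((1 + t ^ 2) * ∑ u, q u -
          t * ∑ u, D.skewAdj v u * q u) := by
        refine Finset.sum_congr rfl fun v _ => ?_
        rw [Finset.mul_sum, Finset.mul_sum, ← Finset.sum_sub_distrib, Finset.mul_sum]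
        exact Finset.sum_congr rfl fun u _ => by ring
    _ = _ := by
        simp only [hq1, mul_one, mul_sub, Finset.sum_sub_distrib, Finset.mul_sum, mulVec,
          dotProduct]
        congr 1
        · exact Finset.sum_congr rfl fun v _ => by ring
        · exact Finset.sum_congr rfl fun v _ => Finset.sum_congr rfl fun u _ => by ring

variable [DecidableEq V] [Nonempty V]

lemma exp_mul_payoff_le_sum_exp (t : ℝ) (x : V → ℝ) :
    Real.exp (t * D.payoff x) ≤ ∑ v, Real.exp (t * (D.skewAdj *ᵥ x) v) := by
  obtain ⟨v, hv⟩ := D.exists_mulVec_eq_payoff x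
  rw [← hv]
  exact Finset.single_le_sum (f := fun v => Real.exp (t * (D.skewAdj *ᵥ x) v))
    (fun _ _ => (Real.exp_pos _).le) (mem_univ v)

lemma softPayoff_le {t : ℝ} (ht : 0 ≤ t) (x : V → ℝ) :
    D.softPayoff t x ≤ Real.log (Fintype.card V) + t * D.payoff x := by
  rw [softPayoff, ← Real.log_exp (t * D.payoff x), ← Real.log_mul (by positivity) (by positivity)]
  refine Real.log_le_log (D.sum_exp_pos t x) ?_
  calc ∑ v, Real.exp (t * (D.skewAdj *ᵥ x) v) ≤ ∑ _v : V, Real.exp (t * D.payoff x) :=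
        Finset.sum_le_sum fun v _ => Real.exp_le_exp.mpr (by gcongr; exact D.le_payoff x v)
    _ = _ := by rw [Finset.sum_const, card_univ, nsmul_eq_mul]

lemma sum_exp_mul_payoff_sub_le {t : ℝ} (ht : 0 < t) (x : V → ℝ) :
    ∑ v, Real.exp (t * (D.skewAdj *ᵥ x) v) * (D.payoff x - (D.skewAdj *ᵥ x) v) ≤
      Fintype.card V * (∑ v, Real.exp (t * (D.skewAdj *ᵥ x) v)) / t := by
  set W := ∑ v, Real.exp (t * (D.skewAdj *ᵥ x) v)
  have hterm : ∀ v, Real.exp (t * (D.skewAdj *ᵥ x) v) * (D.payoff x - (D.skewAdj *ᵥ x) v) ≤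
      W / t := fun v => by
    set s := D.payoff x - (D.skewAdj *ᵥ x) v
    have hsplit : t * (D.skewAdj *ᵥ x) v = t * D.payoff x + -(t * s) := by ring
    calc Real.exp (t * (D.skewAdj *ᵥ x) v) * s
        = Real.exp (t * D.payoff x) * (s * Real.exp (-(t * s))) := by
          rw [hsplit, Real.exp_add]; ring
      _ ≤ Real.exp (t * D.payoff x) * t⁻¹ := by gcongr; exact mul_exp_neg_mul_le_inv ht s
      _ ≤ W * t⁻¹ := by gcongr; exact D.exp_mul_payoff_le_sum_exp t x
      _ = W / t := (div_eq_mul_inv W t).symm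
  calc _ ≤ ∑ _v : V, W / t := Finset.sum_le_sum fun v _ => hterm v
    _ = _ := by rw [Finset.sum_const, card_univ, nsmul_eq_mul, mul_div_assoc]

lemma sum_mul_sum_exp_mulVec_sub_single_le_of_sum_eq {t : ℝ} (ht0 : 0 < t) (ht1 : t ≤ 1)
    {x : V → ℝ} (hx : ∀ u, 0 ≤ x u) {T : ℝ} (hT : 0 < T) (hxT : ∑ u, x u = T) :
    ∑ u, x u / T * ∑ v, Real.exp (t * (D.skewAdj *ᵥ (x - Pi.single u 1)) v) ≤
      (∑ v, Real.exp (t * (D.skewAdj *ᵥ x) v)) *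
        (1 + t ^ 2 - t * D.payoff x / T + Fintype.card V / T) := by
  set W := ∑ v, Real.exp (t * (D.skewAdj *ᵥ x) v)
  have hq1 : ∑ u, x u / T = 1 := by rw [← Finset.sum_div, hxT, div_self hT.ne']
  have hAq : D.skewAdj *ᵥ (fun u => x u / T) = T⁻¹ • D.skewAdj *ᵥ x := by
    rw [← mulVec_smul]; congr 1; funext u; simp [div_eq_inv_mul]
  have hmix := D.sum_mul_sum_exp_mulVec_sub_single_le ht0.le ht1 x
    (fun u => div_nonneg (hx u) hT.le) hq1
  have hgap := D.sum_exp_mul_payoff_sub_le ht0 x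
  simp only [mul_sub, Finset.sum_sub_distrib, ← Finset.sum_mul] at hgap
  simp only [hAq, Pi.smul_apply, smul_eq_mul, mul_left_comm _ T⁻¹, ← Finset.mul_sum] at hmix
  have key : t * T⁻¹ * (W * D.payoff x - Fintype.card V * W / t) ≤
      t * (T⁻¹ * ∑ v, Real.exp (t * (D.skewAdj *ᵥ x) v) * (D.skewAdj *ᵥ x) v) := by
    rw [← mul_assoc]; gcongr; linarith
  calc _ ≤ _ := hmix
    _ ≤ (1 + t ^ 2) * W - t * T⁻¹ * (W * D.payoff x - Fintype.card V * W / t) := by linarith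
    _ = W * (1 + t ^ 2 - t * D.payoff x / T + Fintype.card V / T) := by field_simp; ring

lemma sum_mul_softPayoff_sub_single_le {t : ℝ} (ht0 : 0 < t) (ht1 : t ≤ 1)
    {x : V → ℝ} (hx : ∀ u, 0 ≤ x u) {T : ℝ} (hT : 0 < T) (hxT : ∑ u, x u = T) :
    ∑ u, x u / T * D.softPayoff t (x - Pi.single u 1) ≤
      D.softPayoff t x + t ^ 2 - t * D.payoff x / T + Fintype.card V / T := by
  set W := ∑ v, Real.exp (t * (D.skewAdj *ᵥ x) v)
  set X : V → ℝ := fun u => ∑ v, Real.exp (t * (D.skewAdj *ᵥ (x - Pi.single u 1)) v)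
  have hW : 0 < W := D.sum_exp_pos t x
  have hq1 : ∑ u, x u / T = 1 := by rw [← Finset.sum_div, hxT, div_self hT.ne']
  have hjensen : ∑ u, x u / T * Real.log (X u) ≤ Real.log (∑ u, x u / T * X u) := by
    simpa only [smul_eq_mul] using strictConcaveOn_log_Ioi.concaveOn.le_map_sum
      (fun u _ => div_nonneg (hx u) hT.le) hq1 fun u _ => Set.mem_Ioi.mpr (D.sum_exp_pos t _)
  have hpos : 0 < ∑ u, x u / T * X u := by
    obtain ⟨u, -, hu⟩ := Finset.exists_ne_zero_of_sum_ne_zero (hq1.trans_ne one_ne_zero)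
    exact Finset.sum_pos' (fun u _ => mul_nonneg (div_nonneg (hx u) hT.le) (D.sum_exp_pos t _).le)
      ⟨u, mem_univ u, mul_pos ((div_nonneg (hx u) hT.le).lt_of_ne' hu) (D.sum_exp_pos t _)⟩
  have hmix := D.sum_mul_sum_exp_mulVec_sub_single_le_of_sum_eq ht0 ht1 hx hT hxT
  calc ∑ u, x u / T * D.softPayoff t (x - Pi.single u 1)
      ≤ Real.log (∑ u, x u / T * X u) := hjensen
    _ = Real.log W + Real.log ((∑ u, x u / T * X u) / W) := by
        rw [Real.log_div hpos.ne' hW.ne']; ring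
    _ ≤ Real.log W + ((∑ u, x u / T * X u) / W - 1) := by
        gcongr; exact Real.log_le_sub_one_of_pos (div_pos hpos hW)
    _ ≤ Real.log W + ((1 + t ^ 2 - t * D.payoff x / T + Fintype.card V / T) - 1) := by
        gcongr; rw [div_le_iff₀ hW, mul_comm]; exact hmix
    _ = _ := by rw [softPayoff]; ring

end Smoothing

section UpperBound

variable {V : Type} [Fintype V] [DecidableEq V] [Nonempty V] (D : Digraph' V)

lemma valueAux_le_softPayoff {t : ℝ} (ht0 : 0 < t) (ht1 : t ≤ 1) (n : ℕ) (r : V → ℕ)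
    (hn : ∑ u, r u = n) :
    D.valueAux n r ≤ D.softPayoff t (fun u => (r u : ℝ)) / t + t * n +
      Fintype.card V / t * harmonic n := by
  induction n generalizing r with
  | zero =>
    have hr : (fun u => (r u : ℝ)) = 0 :=
      funext fun u => by simp [Finset.sum_eq_zero_iff.mp hn u (mem_univ u)]
    rw [valueAux, hr, softPayoff_zero]
    simp only [CharP.cast_eq_zero, mul_zero, add_zero, harmonic_zero, Rat.cast_zero]
    have : (0 : ℝ) ≤ Real.log (Fintype.card V) := Real.log_natCast_nonneg _
    positivity
  | succ n ih =>
    have hr : ¬ ∀ u, r u = 0 := fun hr => by simp [hr] at hn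
    set x : V → ℝ := fun u => (r u : ℝ)
    set T : ℝ := n + 1
    have hT : 0 < T := by positivity
    have hxT : ∑ u, x u = T := by simp only [x, T, ← Nat.cast_sum, hn]; push_cast; rfl
    have hx : ∀ u, 0 ≤ x u := fun u => Nat.cast_nonneg _
    have hq1 : ∑ u, x u / T = 1 := by rw [← Finset.sum_div, hxT, div_self hT.ne']
    have hps : ∀ u, x u / T ≠ 0 → r u ≠ 0 := fun u h hu => h (by simp [x, hu])
    set G : ℝ := t * n + Fintype.card V / t * harmonic n
    have hstep : ∀ u, x u / T * D.valueAux n (r -δ u) ≤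
        x u / T * (D.softPayoff t (x - Pi.single u 1) / t + G) := fun u => by
      by_cases hu : x u / T = 0
      · simp [hu]
      refine mul_le_mul_of_nonneg_left ?_ (div_nonneg (hx u) hT.le)
      rw [← cast_sub_single (hps u hu)]
      exact (ih _ (by rw [sum_sub_single (hps u hu), hn]; rfl)).trans_eq (add_assoc _ _ _)
    have hpay : D.payoff (fun u => x u / T) = D.payoff x / T := by
      rw [show (fun u => x u / T) = T⁻¹ • x by funext u; simp [div_eq_inv_mul],
        D.payoff_smul (inv_pos.mpr hT), inv_mul_eq_div]
    have hsoft := D.sum_mul_softPayoff_sub_single_le ht0 ht1 hx hT hxT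
    calc D.valueAux (n + 1) r
        ≤ D.payoff (fun u => x u / T) + ∑ u, x u / T * D.valueAux n (r -δ u) :=
          D.valueAux_succ_le hr (fun u => div_nonneg (hx u) hT.le) hq1 hps
      _ ≤ D.payoff x / T + ∑ u, x u / T * (D.softPayoff t (x - Pi.single u 1) / t + G) :=
          add_le_add hpay.le (Finset.sum_le_sum fun u _ => hstep u)
      _ = D.payoff x / T + (∑ u, x u / T * D.softPayoff t (x - Pi.single u 1)) / t + G := by
          simp only [mul_add, Finset.sum_add_distrib, ← Finset.sum_mul, hq1, one_mul,
            Finset.sum_div, mul_div_assoc]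
          ring
      _ ≤ D.payoff x / T +
            (D.softPayoff t x + t ^ 2 - t * D.payoff x / T + Fintype.card V / T) / t + G := by
          gcongr
      _ = D.softPayoff t x / t + t * ↑(n + 1) + Fintype.card V / t * harmonic (n + 1) := by
          rw [harmonic_succ]
          simp only [T, G]
          push_cast
          field_simp
          ring

lemma value_le_payoff_add {t : ℝ} (ht0 : 0 < t) (ht1 : t ≤ 1) (r : V → ℕ) :
    D.value r ≤ D.payoff (fun u => (r u : ℝ)) + Real.log (Fintype.card V) / t +
      t * ∑ u, (r u : ℝ) + Fintype.card V / t * (1 + Real.log (∑ u, (r u : ℝ))) := by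
  have hvalue := D.valueAux_le_softPayoff ht0 ht1 _ r rfl
  have hsoft : D.softPayoff t (fun u => (r u : ℝ)) / t ≤
      Real.log (Fintype.card V) / t + D.payoff (fun u => (r u : ℝ)) := by
    rw [div_le_iff₀ ht0, add_mul, div_mul_cancel₀ _ ht0.ne', mul_comm _ t]
    exact D.softPayoff_le ht0.le _
  have hharmonic : Fintype.card V / t * (harmonic (∑ u, r u) : ℝ) ≤
      Fintype.card V / t * (1 + Real.log (∑ u, (r u : ℝ))) := by
    gcongr
    exact_mod_cast harmonic_le_one_add_log _
  rw [value]
  push_cast at hvalue hharmonic ⊢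
  linarith

lemma value_le_payoff_add_mul_rpow (r : V → ℕ) (hr : ¬ ∀ u, r u = 0) :
    D.value r ≤ D.payoff (fun u => (r u : ℝ)) +
      (Real.log (Fintype.card V) + 5 * Fintype.card V +
        Fintype.card V * Real.log (Fintype.card V)) *
        ((univ.sup r : ℕ) : ℝ) ^ ((2 : ℝ) / 3) := by
  set M : ℝ := ((univ.sup r : ℕ) : ℝ)
  obtain ⟨u₀, hu₀⟩ := not_forall.mp hr
  have hM : 1 ≤ M :=
    Nat.one_le_cast.mpr ((Nat.one_le_iff_ne_zero.mpr hu₀).trans (le_sup (mem_univ u₀)))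
  set a : ℝ := M ^ ((1 : ℝ) / 3)
  have ha : 1 ≤ a := Real.one_le_rpow hM (by norm_num)
  have hpow (k : ℕ) : a ^ k = M ^ ((k : ℝ) / 3) := by
    rw [← Real.rpow_natCast, ← Real.rpow_mul (by linarith)]; ring_nf
  have hbound := D.value_le_payoff_add (inv_pos.mpr (by positivity)) (inv_le_one_of_one_le₀ ha) r
  simp only [div_inv_eq_mul, inv_mul_eq_div] at hbound
  set N : ℝ := (Fintype.card V : ℝ)
  set n : ℝ := ∑ u, (r u : ℝ)
  have hN : 1 ≤ N := Nat.one_le_cast.mpr Fintype.card_pos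
  have hlogN : 0 ≤ Real.log N := Real.log_nonneg hN
  have hn0 : 0 < n := Finset.sum_pos' (fun u _ => Nat.cast_nonneg _)
    ⟨u₀, mem_univ u₀, Nat.cast_pos.mpr (Nat.pos_of_ne_zero hu₀)⟩
  have hnM : n ≤ N * a ^ 3 := by
    rw [hpow, show ((3 : ℕ) : ℝ) / 3 = 1 by norm_num, Real.rpow_one]
    calc n ≤ ∑ _u : V, M := Finset.sum_le_sum fun u _ => Nat.cast_le.mpr (le_sup (mem_univ u))
      _ = N * M := by rw [Finset.sum_const, card_univ, nsmul_eq_mul]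
  have hlogn : Real.log n ≤ Real.log N + 3 * a := by
    calc Real.log n ≤ Real.log (N * a ^ 3) := Real.log_le_log hn0 hnM
      _ = Real.log N + 3 * Real.log a := by
          rw [Real.log_mul (by positivity) (by positivity), Real.log_pow]; push_cast; ring
      _ ≤ Real.log N + 3 * a := by linarith [Real.log_le_sub_one_of_pos (by positivity : 0 < a)]
  have hdiv : n / a ≤ N * a ^ 2 := by
    rw [div_le_iff₀ (by positivity)]; linarith
  have hmul : N * a * (1 + Real.log n) ≤ N * a ^ 2 * (1 + Real.log N + 3) := by
    have : N * a * (1 + Real.log n) ≤ N * a * (1 + Real.log N + 3 * a) :=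
      mul_le_mul_of_nonneg_left (by linarith) (by positivity)
    nlinarith [mul_nonneg (mul_nonneg (by positivity : 0 ≤ N) (by linarith : 0 ≤ a - 1))
      (by positivity : 0 ≤ 1 + Real.log N)]
  rw [← show a ^ 2 = M ^ ((2 : ℝ) / 3) by rw [hpow]; norm_num]
  nlinarith [mul_le_mul_of_nonneg_left (by nlinarith : a ≤ a ^ 2) hlogN]

end UpperBound

end Digraph'

theorem value_nonuniform_bounds {V : Type} [Fintype V] [DecidableEq V] [Nonempty V]
    (D : Digraph' V) :
    ∃ C : ℝ, 0 < C ∧ ∀ r : V → ℕ, (¬ ∀ u, r u = 0) →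
      (sSup (Set.range fun v => (∑ u ∈ D.outN v, (r u : ℝ)) - ∑ u ∈ D.inN v, (r u : ℝ)))
          ≤ D.value r ∧
      D.value r
        ≤ (sSup (Set.range fun v => (∑ u ∈ D.outN v, (r u : ℝ)) - ∑ u ∈ D.inN v, (r u : ℝ)))
          + C * (((Finset.univ.sup r : ℕ) : ℝ) ^ ((2 : ℝ) / 3)) := by
  have hN : (1 : ℝ) ≤ Fintype.card V := Nat.one_le_cast.mpr Fintype.card_pos
  have hlogN : 0 ≤ Real.log (Fintype.card V) := Real.log_nonneg hN
  exact ⟨_, by positivity, fun r hr => ⟨D.payoff_le_value r, D.value_le_payoff_add_mul_rpow r hr⟩⟩
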